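/- Fix angles 0 < θ₁* ≤ θ₂* < π, set R = sin θ₁*/sin θ₂* and m = cos θ₁* − sin θ₁* · cos θ₂*/sin θ₂*. Let N ≥ 4 be an integer, r_N* = (1 − 2 ln(2(N+1))/(N+1))^{1/2}, C₁ = (θ₂* − θ₁*)/π and ε(r_N*) = (2/π) ∫₀^{r_N*} s^N/(1−s) ds. Then for every continuous v: [−θ₁*, θ₁*] → ℝ and every φ ∈ (θ₂*, 2π − θ₂*) such that the point p(φ) = (m + R cos φ, R sin φ), written in polar coordinates as p(φ) = (r cos θ, r sin θ), satisfies r ≤ r_N*, one has |(1/(2π)) ∫_{−θ₁*}^{θ₁*} K_N(θ−θ′, r) v(θ′) dθ′| ≤ (C₁ + ε(r_N*)) · sup_{θ′ ∈ [−θ₁*, θ₁*]} |v(θ′)|. -/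

import Mathlib

open Real MeasureTheory Set

/-- The truncated Poisson kernel. -/
noncomputable def KN (N : ℕ) (ψ r : ℝ) : ℝ :=
  1 + 2 * ∑ n ∈ Finset.Icc 1 N, r^n * Real.cos (n*ψ)

-- closed form
lemma KN_mul (N : ℕ) (ψ r : ℝ) :
    KN N ψ r * (1 - 2*r*Real.cos ψ + r^2)
      = 1 - r^2 - 2*r^(N+1)*Real.cos ((N+1)*ψ) + 2*r^(N+2)*Real.cos (N*ψ) := by
  induction N with
  | zero => simp [KN]; ring
  | succ n ih =>
    have hs : KN (n+1) ψ r = KN n ψ r + 2*(r^(n+1) * Real.cos ((n+1)*ψ)) := by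
      unfold KN
      rw [Finset.sum_Icc_succ_top (by norm_num : 1 ≤ n+1)]
      push_cast
      ring
    have hc2 : Real.cos (((n:ℝ)+1+1)*ψ) = 2*Real.cos (((n:ℝ)+1)*ψ)*Real.cos ψ - Real.cos ((n:ℝ)*ψ) := by
      have e1 : ((n:ℝ)+1+1)*ψ = ((n:ℝ)+1)*ψ + ψ := by ring
      have e2 : ((n:ℝ))*ψ = ((n:ℝ)+1)*ψ - ψ := by ring
      rw [e1, e2, Real.cos_add, Real.cos_sub]
      ring
    rw [hs]
    push_cast
    push_cast at ih
    linear_combination ih + 2*r^(n+2)*hc2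

lemma KN_nonneg (N : ℕ) (ψ r : ℝ) (hr0 : 0 ≤ r) (hr1 : r < 1)
    (hkey : 2*r^(N+1) ≤ 1 - r) : 0 ≤ KN N ψ r := by
  have hD : 0 < 1 - 2*r*Real.cos ψ + r^2 := by
    nlinarith [Real.cos_le_one ψ, Real.neg_one_le_cos ψ, sq_nonneg (1-r)]
  have h1 : Real.cos ((N+1:ℕ)*ψ) ≤ 1 := Real.cos_le_one _
  have h2 : -1 ≤ Real.cos ((N:ℕ)*ψ) := Real.neg_one_le_cos _
  have hpow : 0 ≤ r^(N+1) := pow_nonneg hr0 _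
  have hnum : 0 ≤ KN N ψ r * (1 - 2*r*Real.cos ψ + r^2) := by
    rw [KN_mul]
    push_cast
    have hr2 : r^(N+2) = r^(N+1) * r := by ring
    push_cast at h1 h2
    nlinarith [mul_nonneg hpow hr0]
  nlinarith [hnum, hD]

lemma log_ten_lt : Real.log 10 < 5/2 := by
  rw [Real.log_lt_iff_lt_exp (by norm_num)]
  have h1 : Real.exp 1 > 2.7182818283 := Real.exp_one_gt_d9
  have h5 : Real.exp ((5:ℕ):ℝ) = Real.exp 1 ^ (5:ℕ) := (Real.exp_one_pow 5).symm
  push_cast at h5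
  have h52 : Real.exp (5/2) * Real.exp (5/2) = Real.exp 5 := by
    rw [← Real.exp_add]; norm_num
  have h15 : (2.7182818283:ℝ)^5 < (Real.exp 1)^5 := by
    apply pow_lt_pow_left₀ h1 (by norm_num)
    norm_num
  nlinarith [Real.exp_pos (5/2), Real.exp_pos 1]

lemma one_lt_log (y : ℝ) (hy : 10 ≤ y) : 1 < Real.log y := by
  have : Real.exp 1 < y := by
    have := Real.exp_one_lt_d9; nlinarith
  calc 1 = Real.log (Real.exp 1) := by rw [Real.log_exp]
  _ < Real.log y := Real.log_lt_log (Real.exp_pos 1) this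

lemma qfacts (N : ℕ) (hN : 4 ≤ N) :
    Real.sqrt (1 - 2*Real.log (2*(N+1))/(N+1)) < 1 ∧
    2 * (Real.sqrt (1 - 2*Real.log (2*(N+1))/(N+1)))^(N+1) ≤
      1 - Real.sqrt (1 - 2*Real.log (2*(N+1))/(N+1)) := by
  have hM5 : (5:ℝ) ≤ (N:ℝ)+1 := by
    have : (4:ℝ) ≤ (N:ℝ) := by exact_mod_cast hN
    linarith
  set M : ℝ := (N:ℝ)+1 with hM
  have hMpos : 0 < M := by linarith
  have hlog_eq : Real.log (2*M) = Real.log 10 + Real.log (M/5) := by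
    rw [show (2:ℝ)*M = 10*(M/5) by ring, Real.log_mul (by norm_num) (by positivity)]
  have hlogsub : Real.log (M/5) ≤ M/5 - 1 := Real.log_le_sub_one_of_pos (by positivity)
  have hlt : 2*Real.log (2*M) < M := by
    have := log_ten_lt
    rw [hlog_eq]; nlinarith
  have hlog1 : 1 < Real.log (2*M) := one_lt_log _ (by linarith)
  set t : ℝ := 2*Real.log (2*M)/M with ht
  have htpos : 0 < t := by
    have : 0 < Real.log (2*M) := by linarith
    positivity
  have hxpos : 0 < 1 - t := by
    have : t < 1 := (div_lt_one hMpos).mpr hlt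
    linarith
  set q : ℝ := Real.sqrt (1-t) with hq
  have hq0 : 0 ≤ q := Real.sqrt_nonneg _
  have hqsq : q^2 = 1-t := Real.sq_sqrt hxpos.le
  have hq1 : q < 1 := by
    rw [hq, Real.sqrt_lt' (by norm_num)]
    nlinarith
  have hqpow : q^(N+1) ≤ 1/(2*M) := by
    have h1 : (q^(N+1))^2 = (1-t)^(N+1) := by
      rw [← pow_mul, mul_comm (N+1) 2, pow_mul, hqsq]
    have h2 : (1-t) ≤ Real.exp (-t) := by
      nlinarith [Real.add_one_le_exp (-t)]
    have h3 : (1-t)^(N+1) ≤ (Real.exp (-t))^(N+1) :=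
      pow_le_pow_left₀ hxpos.le h2 _
    have h4 : (Real.exp (-t))^(N+1) = Real.exp (-(t*M)) := by
      rw [← Real.exp_nat_mul]
      congr 1
      rw [hM]; push_cast; ring
    have h5 : t*M = 2*Real.log (2*M) := by
      rw [ht]; field_simp
    have h6 : Real.exp (-(2*Real.log (2*M))) = (1/(2*M))^2 := by
      rw [show -(2*Real.log (2*M)) = (-Real.log (2*M)) + (-Real.log (2*M)) by ring,
        Real.exp_add, Real.exp_neg, Real.exp_log (by linarith)]
      field_simp
    have h7 : (q^(N+1))^2 ≤ (1/(2*M))^2 := by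
      rw [h1, ← h6, ← h5]
      exact h3.trans (le_of_eq h4)
    have h7' := Real.sqrt_le_sqrt h7
    rwa [Real.sqrt_sq (by positivity), Real.sqrt_sq (by positivity)] at h7'
  constructor
  · exact hq1
  · -- 2 q^{N+1} ≤ 1/M ≤ log(2M)/M = t/2 ≤ (1-q^2)/2 ≤ 1-q
    have h8 : 2*q^(N+1) ≤ 1/M := by
      have e : 2*(1/(2*M)) = 1/M := by field_simp
      linarith
    have h9 : 1/M ≤ t/2 := by
      rw [ht, show (2*Real.log (2*M)/M)/2 = Real.log (2*M)/M by ring]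
      gcongr

    nlinarith [sq_nonneg (1-q), h8, h9, hqsq]

lemma hasSum_sin_series (r x : ℝ) (hr0 : 0 ≤ r) (hr1 : r < 1) :
    HasSum (fun n : ℕ => r^n * Real.sin (n*x) / n)
      (-(Complex.arg (1 - (r:ℂ) * Complex.exp (x*Complex.I)))) := by
  set z : ℂ := (r:ℂ) * Complex.exp (x*Complex.I) with hz
  have hnz : ‖z‖ < 1 := by
    rw [hz, norm_mul, Complex.norm_exp_ofReal_mul_I, mul_one, Complex.norm_real]
    rwa [Real.norm_of_nonneg hr0]
  have h := (Complex.hasSum_taylorSeries_neg_log hnz).mapL Complex.imCLM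
  have heq : (fun n : ℕ => Complex.imCLM (z^n / n)) = fun n : ℕ => r^n * Real.sin (n*x) / n := by
    funext n
    rcases Nat.eq_zero_or_pos n with h0 | hpos
    · simp [h0]
    · have hzn : z^n = ((r^n : ℝ) : ℂ) * Complex.exp (((n : ℝ) * x : ℝ) * Complex.I) := by
        have harg : ((n:ℂ)) * (↑x * Complex.I) = ((((n:ℝ) * x : ℝ)):ℂ) * Complex.I := by
          push_cast; ring
        rw [hz, mul_pow, ← Complex.exp_nat_mul, harg]
        norm_cast
      simp only [Complex.imCLM_apply, hzn, Complex.div_im]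
      simp only [Complex.mul_im, Complex.mul_re, Complex.ofReal_re, Complex.ofReal_im,
        Complex.exp_ofReal_mul_I_re, Complex.exp_ofReal_mul_I_im,
        Complex.natCast_re, Complex.natCast_im, Complex.normSq_natCast]
      push_cast
      have hn : (n:ℝ) ≠ 0 := by positivity
      field_simp
      ring
  rw [heq] at h
  convert h using 1
  simp [Complex.imCLM_apply, Complex.log_im]

lemma arg_pair (θ1 θ2 R m r θ φ : ℝ) (h1 : 0 < θ1) (h12 : θ1 ≤ θ2) (h2 : θ2 < π)
    (hR : R = Real.sin θ1 / Real.sin θ2)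
    (hm : m = Real.cos θ1 - Real.sin θ1 * Real.cos θ2 / Real.sin θ2)
    (hφ : φ ∈ Set.Ioo θ2 (2*π - θ2))
    (hpx : m + R*Real.cos φ = r*Real.cos θ) (hpy : R*Real.sin φ = r*Real.sin θ) :
    Complex.arg (1 - (r:ℂ)*Complex.exp ((θ1+θ:ℝ)*Complex.I)) = θ1 + (φ-θ2)/2 - π/2 ∧
    Complex.arg (1 - (r:ℂ)*Complex.exp ((θ1-θ:ℝ)*Complex.I)) = θ1 + π/2 - (φ+θ2)/2 := by
  have hs1 : 0 < Real.sin θ1 := Real.sin_pos_of_pos_of_lt_pi h1 (lt_of_le_of_lt h12 h2)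
  have hs2 : 0 < Real.sin θ2 := Real.sin_pos_of_pos_of_lt_pi (lt_of_lt_of_le h1 h12) h2
  have hθ2pos : 0 < θ2 := lt_of_lt_of_le h1 h12
  obtain ⟨hφ1, hφ2⟩ := hφ
  have hπ : 0 < π := Real.pi_pos
  set u : ℝ := (φ+θ2)/2 with hu
  set v : ℝ := (φ-θ2)/2 with hv
  have hu1 : θ2 < u := by rw [hu]; linarith
  have hu2 : u < π := by rw [hu]; linarith
  have hv1 : 0 < v := by rw [hv]; linarith
  have hv2 : v < π - θ2 := by rw [hv]; linarith
  have hsu : 0 < Real.sin u := Real.sin_pos_of_pos_of_lt_pi (by linarith) hu2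
  have hsv : 0 < Real.sin v := Real.sin_pos_of_pos_of_lt_pi hv1 (by linarith)
  have hRpos : 0 < R := by rw [hR]; positivity
  have f3 : R * Real.sin θ2 = Real.sin θ1 := by rw [hR]; field_simp
  have f4 : m * Real.sin θ2 = Real.cos θ1 * Real.sin θ2 - Real.sin θ1 * Real.cos θ2 := by
    rw [hm]; field_simp
  have p : Real.sin θ1^2 + Real.cos θ1^2 = 1 := Real.sin_sq_add_cos_sq θ1
  constructor
  · -- first arg
    have keyRe : 1 - r*Real.cos (θ1+θ) = 2*R*Real.sin u * Real.cos (θ1 + v - π/2) := by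
      rw [Real.cos_sub_pi_div_two]
      have hcc : Real.cos (θ1-θ2) - Real.cos (θ1+φ) = 2*Real.sin u*Real.sin (θ1+v) := by
        rw [Real.cos_sub_cos]
        rw [show ((θ1-θ2)+(θ1+φ))/2 = θ1+v by rw [hv]; ring,
            show ((θ1-θ2)-(θ1+φ))/2 = -u by rw [hu]; ring, Real.sin_neg]
        ring
      have hA : (1 - r*Real.cos (θ1+θ)) * Real.sin θ2
          = (R*(Real.cos (θ1-θ2) - Real.cos (θ1+φ))) * Real.sin θ2 := by
        rw [Real.cos_add θ1 θ, Real.cos_sub θ1 θ2, Real.cos_add θ1 φ]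
        linear_combination (Real.cos θ1*Real.sin θ2)*hpx + (-(Real.sin θ1*Real.sin θ2))*hpy
          + (-(Real.cos θ1*Real.cos θ2 + Real.sin θ1*Real.sin θ2))*f3 + (-(Real.cos θ1))*f4
          + (-(Real.sin θ2))*p
      have := mul_right_cancel₀ hs2.ne' hA
      rw [this, hcc]; ring
    have keyIm : -(r*Real.sin (θ1+θ)) = 2*R*Real.sin u * Real.sin (θ1 + v - π/2) := by
      rw [Real.sin_sub_pi_div_two]
      have hss : Real.sin (θ1-θ2) - Real.sin (θ1+φ) = -(2*Real.sin u*Real.cos (θ1+v)) := by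
        rw [Real.sin_sub_sin]
        rw [show ((θ1-θ2)-(θ1+φ))/2 = -u by rw [hu]; ring,
            show ((θ1-θ2)+(θ1+φ))/2 = θ1+v by rw [hv]; ring, Real.sin_neg]
        ring
      have hA : (-(r*Real.sin (θ1+θ))) * Real.sin θ2
          = (R*(Real.sin (θ1-θ2) - Real.sin (θ1+φ))) * Real.sin θ2 := by
        rw [Real.sin_add θ1 θ, Real.sin_sub θ1 θ2, Real.sin_add θ1 φ]
        linear_combination (Real.sin θ1*Real.sin θ2)*hpx + (Real.cos θ1*Real.sin θ2)*hpy
          + (-(Real.sin θ1*Real.cos θ2) + Real.sin θ2*Real.cos θ1)*f3 + (-(Real.sin θ1))*f4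
      have := mul_right_cancel₀ hs2.ne' hA
      rw [this, hss]; ring
    have key : (1:ℂ) - (r:ℂ)*Complex.exp ((θ1+θ:ℝ)*Complex.I)
        = ((2*R*Real.sin u : ℝ):ℂ) * (Real.cos (θ1+v-π/2) + Real.sin (θ1+v-π/2) * Complex.I) := by
      apply Complex.ext <;>
      simp only [Complex.sub_re, Complex.one_re, Complex.mul_re, Complex.ofReal_re,
        Complex.ofReal_im, Complex.exp_ofReal_mul_I_re, Complex.exp_ofReal_mul_I_im,
        Complex.add_re, Complex.add_im, Complex.mul_im, Complex.I_re, Complex.I_im,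
        Complex.sub_im, Complex.one_im]
      · linear_combination keyRe
      · linear_combination keyIm
    rw [key, Complex.arg_real_mul _ (by positivity), Complex.ofReal_cos, Complex.ofReal_sin,
      Complex.arg_cos_add_sin_mul_I (Set.mem_Ioc.mpr ⟨by linarith, by linarith⟩)]
  · -- second arg
    have keyRe : 1 - r*Real.cos (θ1-θ) = 2*R*Real.sin v * Real.cos (θ1 + π/2 - u) := by
      rw [show θ1 + π/2 - u = (θ1 - u) + π/2 by ring, Real.cos_add_pi_div_two]
      have hcc : Real.cos (θ1-θ2) - Real.cos (θ1-φ) = -(2*Real.sin (θ1-u)*Real.sin v) := by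
        rw [Real.cos_sub_cos]
        rw [show ((θ1-θ2)+(θ1-φ))/2 = θ1-u by rw [hu]; ring,
            show ((θ1-θ2)-(θ1-φ))/2 = v by rw [hv]; ring]
        ring
      have hA : (1 - r*Real.cos (θ1-θ)) * Real.sin θ2
          = (R*(Real.cos (θ1-θ2) - Real.cos (θ1-φ))) * Real.sin θ2 := by
        rw [Real.cos_sub θ1 θ, Real.cos_sub θ1 θ2, Real.cos_sub θ1 φ]
        linear_combination (Real.cos θ1*Real.sin θ2)*hpx + (Real.sin θ1*Real.sin θ2)*hpy
          + (-(Real.cos θ1*Real.cos θ2 + Real.sin θ1*Real.sin θ2))*f3 + (-(Real.cos θ1))*f4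
          + (-(Real.sin θ2))*p
      have := mul_right_cancel₀ hs2.ne' hA
      rw [this, hcc]; ring
    have keyIm : -(r*Real.sin (θ1-θ)) = 2*R*Real.sin v * Real.sin (θ1 + π/2 - u) := by
      rw [show θ1 + π/2 - u = (θ1 - u) + π/2 by ring, Real.sin_add_pi_div_two]
      have hss : Real.sin (θ1-θ2) - Real.sin (θ1-φ) = 2*Real.sin v*Real.cos (θ1-u) := by
        rw [Real.sin_sub_sin]
        rw [show ((θ1-θ2)-(θ1-φ))/2 = v by rw [hv]; ring,
            show ((θ1-θ2)+(θ1-φ))/2 = θ1-u by rw [hu]; ring]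
        try ring
      have hA : (-(r*Real.sin (θ1-θ))) * Real.sin θ2
          = (R*(Real.sin (θ1-θ2) - Real.sin (θ1-φ))) * Real.sin θ2 := by
        rw [Real.sin_sub θ1 θ, Real.sin_sub θ1 θ2, Real.sin_sub θ1 φ]
        linear_combination (Real.sin θ1*Real.sin θ2)*hpx + (-(Real.cos θ1*Real.sin θ2))*hpy
          + (-(Real.sin θ1*Real.cos θ2) + Real.sin θ2*Real.cos θ1)*f3 + (-(Real.sin θ1))*f4
      have := mul_right_cancel₀ hs2.ne' hA
      rw [this, hss]; ring
    have key : (1:ℂ) - (r:ℂ)*Complex.exp ((θ1-θ:ℝ)*Complex.I)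
        = ((2*R*Real.sin v : ℝ):ℂ) * (Real.cos (θ1+π/2-u) + Real.sin (θ1+π/2-u) * Complex.I) := by
      apply Complex.ext <;>
      simp only [Complex.sub_re, Complex.one_re, Complex.mul_re, Complex.ofReal_re,
        Complex.ofReal_im, Complex.exp_ofReal_mul_I_re, Complex.exp_ofReal_mul_I_im,
        Complex.add_re, Complex.add_im, Complex.mul_im, Complex.I_re, Complex.I_im,
        Complex.sub_im, Complex.one_im]
      · linear_combination keyRe
      · linear_combination keyIm
    rw [key, Complex.arg_real_mul _ (by positivity), Complex.ofReal_cos, Complex.ofReal_sin,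
      Complex.arg_cos_add_sin_mul_I (Set.mem_Ioc.mpr ⟨by linarith, by linarith⟩)]

lemma KN_integral (N : ℕ) (r θ θ1 : ℝ) :
    ∫ θ' in (-θ1)..θ1, KN N (θ - θ') r
      = 2*θ1 + 2*∑ n ∈ Finset.Icc 1 N,
          (r^n * Real.sin (n*(θ1+θ))/n + r^n * Real.sin (n*(θ1-θ))/n) := by
  have hterm : ∀ n : ℕ, n ∈ Finset.Icc 1 N →
      (∫ θ' in (-θ1)..θ1, r^n * Real.cos (n*(θ - θ')))
        = r^n * Real.sin (n*(θ1+θ))/n + r^n * Real.sin (n*(θ1-θ))/n := by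
    intro n hn
    have hn1 : 1 ≤ n := (Finset.mem_Icc.mp hn).1
    have hnne : (n:ℝ) ≠ 0 := by positivity
    have hF : ∀ x : ℝ, HasDerivAt (fun x => -(Real.sin ((n:ℝ)*θ - n*x)/n))
        (Real.cos ((n:ℝ)*θ - n*x)) x := by
      intro x
      have h0 : HasDerivAt (fun x : ℝ => (n:ℝ)*θ - n*x) (-(n:ℝ)) x := by
        simpa using ((hasDerivAt_id x).const_mul (n:ℝ)).const_sub ((n:ℝ)*θ)
      have h1 := (Real.hasDerivAt_sin ((n:ℝ)*θ - n*x)).comp x h0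
      have h2 := (h1.div_const (n:ℝ)).neg
      convert h2 using 1
      · rfl
      · rfl
      · rfl
      rw [mul_neg, neg_div, neg_neg, mul_div_assoc, div_self hnne, mul_one]
    have heval : (∫ θ' in (-θ1)..θ1, Real.cos ((n:ℝ)*θ - n*θ'))
        = -(Real.sin ((n:ℝ)*θ - n*θ1)/n) - -(Real.sin ((n:ℝ)*θ - n*(-θ1))/n) := by
      apply intervalIntegral.integral_eq_sub_of_hasDerivAt (fun x _ => hF x)
      apply Continuous.intervalIntegrable
      fun_prop
    have : (∫ θ' in (-θ1)..θ1, r^n * Real.cos ((n:ℝ)*(θ - θ')))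
        = r^n * ∫ θ' in (-θ1)..θ1, Real.cos ((n:ℝ)*θ - n*θ') := by
      rw [← intervalIntegral.integral_const_mul]
      congr 1; funext θ'; ring_nf
    rw [this, heval]
    have e1 : (n:ℝ)*θ - n*θ1 = -((n:ℝ)*(θ1 - θ)) := by ring
    have e2 : (n:ℝ)*θ - n*(-θ1) = (n:ℝ)*(θ1 + θ) := by ring
    rw [e1, e2, Real.sin_neg]
    field_simp
    ring
  have hcont : ∀ n : ℕ, Continuous (fun θ' : ℝ => r^n * Real.cos ((n:ℝ)*(θ - θ'))) := by
    intro n; fun_prop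
  calc ∫ θ' in (-θ1)..θ1, KN N (θ - θ') r
      = ∫ θ' in (-θ1)..θ1, (1 + 2*∑ n ∈ Finset.Icc 1 N, r^n * Real.cos ((n:ℝ)*(θ - θ'))) := by
        rfl
    _ = (∫ θ' in (-θ1)..θ1, (1:ℝ))
        + ∫ θ' in (-θ1)..θ1, 2*∑ n ∈ Finset.Icc 1 N, r^n * Real.cos ((n:ℝ)*(θ - θ')) := by
        apply intervalIntegral.integral_add intervalIntegrable_const
        apply Continuous.intervalIntegrable
        fun_prop
    _ = 2*θ1 + 2*∑ n ∈ Finset.Icc 1 N,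
          (r^n * Real.sin (n*(θ1+θ))/n + r^n * Real.sin (n*(θ1-θ))/n) := by
        rw [intervalIntegral.integral_const]
        rw [intervalIntegral.integral_const_mul]
        rw [intervalIntegral.integral_finset_sum
          (fun n _ => ((hcont n).intervalIntegrable _ _))]
        rw [Finset.sum_congr rfl hterm]
        simp
        ring

-- partial geometric integral bound
lemma tail_le_integral (N : ℕ) (q : ℝ) (hq0 : 0 ≤ q) (hq1 : q < 1) :
    (∑' k : ℕ, q^(N+1+k)/(N+1+k)) ≤ ∫ s in (0:ℝ)..q, s^N/(1-s) := by
  have hint : IntervalIntegrable (fun s => s^N/(1-s)) volume 0 q := by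
    apply ContinuousOn.intervalIntegrable
    apply ContinuousOn.div (by fun_prop) (by fun_prop)
    intro s hs
    rw [Set.uIcc_of_le hq0] at hs
    have := hs.2
    intro h; nlinarith [hs.2]
  apply Real.tsum_le_of_sum_range_le
  · intro k; positivity
  · intro M
    have hstep : ∀ k : ℕ, q^(N+1+k)/((N:ℝ)+1+k) = ∫ s in (0:ℝ)..q, s^(N+k) := by
      intro k
      rw [integral_pow]
      push_cast
      rw [zero_pow (by omega)]
      ring_nf
    calc ∑ k ∈ Finset.range M, q^(N+1+k)/((N:ℝ)+1+(k:ℝ))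
        = ∑ k ∈ Finset.range M, ∫ s in (0:ℝ)..q, s^(N+k) := by
          apply Finset.sum_congr rfl
          intro k _
          rw [← hstep k]
      _ = ∫ s in (0:ℝ)..q, ∑ k ∈ Finset.range M, s^(N+k) := by
          rw [intervalIntegral.integral_finset_sum
            (fun k _ => (continuous_pow _).intervalIntegrable _ _)]
      _ ≤ ∫ s in (0:ℝ)..q, s^N/(1-s) := by
          apply intervalIntegral.integral_mono_on hq0 _ hint
          · intro s hs
            obtain ⟨hs0, hsq⟩ := hs
            have hs1 : s < 1 := lt_of_le_of_lt hsq hq1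
            have hgeom : ∑ k ∈ Finset.range M, s^k ≤ 1/(1-s) := by
              rw [geom_sum_eq (by intro h; rw [h] at hs1; linarith : s ≠ 1)]
              rw [show (s^M - 1)/(s-1) = (1 - s^M)/(1-s) by rw [← neg_div_neg_eq]; ring_nf]
              gcongr
              · nlinarith [pow_nonneg hs0 M]
            calc ∑ k ∈ Finset.range M, s^(N+k)
                = s^N * ∑ k ∈ Finset.range M, s^k := by
                  rw [Finset.mul_sum]
                  apply Finset.sum_congr rfl
                  intro k _; rw [pow_add]
              _ ≤ s^N * (1/(1-s)) :=
                  mul_le_mul_of_nonneg_left hgeom (pow_nonneg hs0 _)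
              _ = s^N/(1-s) := by ring
          · apply (by fun_prop : Continuous fun s : ℝ => ∑ k ∈ Finset.range M, s^(N+k)).intervalIntegrable

theorem stmt11 (θ1 θ2 : ℝ) (h1 : 0 < θ1) (h12 : θ1 ≤ θ2) (h2 : θ2 < π)
    (R m : ℝ) (hR : R = Real.sin θ1 / Real.sin θ2)
    (hm : m = Real.cos θ1 - Real.sin θ1 * Real.cos θ2 / Real.sin θ2)
    (N : ℕ) (hN : 4 ≤ N)
    (v : ℝ → ℝ) (hv : ContinuousOn v (Set.Icc (-θ1) θ1))
    (φ : ℝ) (hφ : φ ∈ Set.Ioo θ2 (2*π - θ2))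
    (r θ : ℝ) (hr0 : 0 ≤ r)
    (hpx : m + R*Real.cos φ = r*Real.cos θ) (hpy : R*Real.sin φ = r*Real.sin θ)
    (hrN : r ≤ Real.sqrt (1 - 2*Real.log (2*(N+1))/(N+1))) :
    |(1/(2*π)) * ∫ θ' in (-θ1)..θ1, KN N (θ - θ') r * v θ'| ≤
      ((θ2 - θ1)/π +
        (2/π) * ∫ s in (0:ℝ)..(Real.sqrt (1 - 2*Real.log (2*(N+1))/(N+1))), s^N/(1-s)) *
        sSup ((fun θ' => |v θ'|) '' Set.Icc (-θ1) θ1) := by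
  set q : ℝ := Real.sqrt (1 - 2*Real.log (2*(N+1))/(N+1)) with hq
  obtain ⟨hq1, hqkey⟩ := qfacts N hN
  rw [← hq] at hq1 hqkey
  have hq0 : 0 ≤ q := Real.sqrt_nonneg _
  have hr1 : r < 1 := lt_of_le_of_lt hrN hq1
  have hkey : 2*r^(N+1) ≤ 1 - r := by
    have h1' : r^(N+1) ≤ q^(N+1) := pow_le_pow_left₀ hr0 hrN _
    linarith
  have Kpos : ∀ ψ : ℝ, 0 ≤ KN N ψ r := fun ψ => KN_nonneg N ψ r hr0 hr1 hkey
  have hab : -θ1 ≤ θ1 := by linarith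
  set M : ℝ := sSup ((fun θ' => |v θ'|) '' Set.Icc (-θ1) θ1) with hM
  have hbdd : BddAbove ((fun θ' => |v θ'|) '' Set.Icc (-θ1) θ1) :=
    isCompact_Icc.bddAbove_image hv.abs
  have hMv : ∀ x ∈ Set.Icc (-θ1) θ1, |v x| ≤ M := fun x hx => le_csSup hbdd ⟨x, hx, rfl⟩
  have hM0 : 0 ≤ M :=
    le_trans (abs_nonneg _) (hMv (-θ1) ⟨le_refl _, hab⟩)
  have Kc : Continuous (fun θ' : ℝ => KN N (θ - θ') r) := by
    unfold KN; fun_prop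
  have hfint : IntervalIntegrable (fun θ' => KN N (θ - θ') r * v θ') volume (-θ1) θ1 := by
    apply ContinuousOn.intervalIntegrable
    rw [Set.uIcc_of_le hab]
    exact Kc.continuousOn.mul hv
  -- bound |∫ K v| ≤ (∫ K) * M
  have step1 : |∫ θ' in (-θ1)..θ1, KN N (θ - θ') r * v θ'|
      ≤ ∫ θ' in (-θ1)..θ1, |KN N (θ - θ') r * v θ'| :=
    intervalIntegral.abs_integral_le_integral_abs hab
  have step2 : (∫ θ' in (-θ1)..θ1, |KN N (θ - θ') r * v θ'|)
      ≤ ∫ θ' in (-θ1)..θ1, KN N (θ - θ') r * M := by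
    apply intervalIntegral.integral_mono_on hab hfint.abs
      ((Kc.mul continuous_const).intervalIntegrable _ _)
    intro x hx
    rw [abs_mul, abs_of_nonneg (Kpos _)]
    exact mul_le_mul_of_nonneg_left (hMv x hx) (Kpos _)
  have step3 : (∫ θ' in (-θ1)..θ1, KN N (θ - θ') r * M)
      = (∫ θ' in (-θ1)..θ1, KN N (θ - θ') r) * M := by
    rw [← intervalIntegral.integral_mul_const]
  -- series bound
  set g : ℕ → ℝ := fun n => r^n * Real.sin (n*(θ1+θ))/n + r^n * Real.sin (n*(θ1-θ))/n with hg
  have hargs := arg_pair θ1 θ2 R m r θ φ h1 h12 h2 hR hm hφ hpx hpy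
  have hgs : HasSum g (θ2 - 2*θ1) := by
    have hA := hasSum_sin_series r (θ1+θ) hr0 hr1
    have hB := hasSum_sin_series r (θ1-θ) hr0 hr1
    have h' := hA.add hB
    rw [hargs.1, hargs.2] at h'
    have : -(θ1 + (φ-θ2)/2 - π/2) + -(θ1 + π/2 - (φ+θ2)/2) = θ2 - 2*θ1 := by ring
    rwa [this] at h'
  set J : ℝ := ∫ s in (0:ℝ)..q, s^N/(1-s) with hJ
  have htail : ∑ n ∈ Finset.Icc 1 N, g n ≤ (θ2 - 2*θ1) + 2*J := by
    have hsummable := hgs.summable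
    have hsplit := Summable.sum_add_tsum_nat_add (f := g) (N+1) hsummable
    rw [hgs.tsum_eq] at hsplit
    have hrange : ∑ n ∈ Finset.range (N+1), g n = g 0 + ∑ n ∈ Finset.Icc 1 N, g n := by
      rw [Finset.range_eq_Ico, Finset.sum_eq_sum_Ico_succ_bot (Nat.succ_pos N), Nat.succ_eq_add_one, Finset.Ico_add_one_right_eq_Icc, zero_add]
    have hg0 : g 0 = 0 := by simp [hg]
    -- majorant
    have hmaj : ∀ k : ℕ, |g (k + (N+1))| ≤ 2*(q^(N+1+k)/(N+1+k)) := by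
      intro k
      have hm1 : (0:ℝ) < (N:ℝ)+1+k := by positivity
      have hqm : r^(k+(N+1)) ≤ q^(N+1+k) := by
        rw [show k+(N+1) = N+1+k by ring]
        exact pow_le_pow_left₀ hr0 hrN _
      have hb : ∀ y : ℝ, |r^(k+(N+1)) * Real.sin y / (k+(N+1) : ℕ)| ≤ q^(N+1+k)/(N+1+k) := by
        intro y
        rw [abs_div, abs_mul]
        rw [abs_of_nonneg (pow_nonneg hr0 _)]
        have : |((k+(N+1) : ℕ) : ℝ)| = (N:ℝ)+1+k := by
          rw [abs_of_nonneg (by positivity)]; push_cast; ring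
        rw [this]
        apply div_le_div₀ (by positivity) _ hm1 (by push_cast; linarith)
        have hsin : |Real.sin y| ≤ 1 := abs_le.mpr ⟨Real.neg_one_le_sin y, Real.sin_le_one y⟩
        calc r^(k+(N+1)) * |Real.sin y| ≤ r^(k+(N+1)) * 1 :=
            mul_le_mul_of_nonneg_left hsin (pow_nonneg hr0 _)
          _ ≤ q^(N+1+k) := by rw [mul_one]; exact hqm
      simp only [hg]
      refine le_trans (abs_add_le _ _) (le_trans (add_le_add (hb _) (hb _)) (le_of_eq (by ring)))
    have hsummaj : Summable (fun k : ℕ => 2*(q^(N+1+k)/(N+1+k))) := by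
      apply Summable.mul_left
      apply Summable.of_nonneg_of_le (fun k => by positivity) (fun k => ?_)
        (((summable_geometric_of_lt_one hq0 hq1).mul_left (q^(N+1))))
      rw [← pow_add]
      apply div_le_self (by positivity)
      push_cast
      have hk0 : (0:ℝ) ≤ (k:ℝ) := Nat.cast_nonneg k
      have hN0 : (0:ℝ) ≤ (N:ℝ) := Nat.cast_nonneg N
      linarith
    have habs_sum : Summable (fun k : ℕ => |g (k + (N+1))|) :=
      Summable.of_nonneg_of_le (fun k => abs_nonneg _) hmaj hsummaj
    have hT : |∑' k : ℕ, g (k + (N+1))| ≤ 2*(∑' k : ℕ, q^(N+1+k)/(N+1+k)) := by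
      calc |∑' k : ℕ, g (k + (N+1))| ≤ ∑' k : ℕ, |g (k + (N+1))| := by
            have := norm_tsum_le_tsum_norm (f := fun k : ℕ => g (k + (N+1)))
              (by simpa only [Real.norm_eq_abs] using habs_sum)
            simpa only [Real.norm_eq_abs] using this
        _ ≤ ∑' k : ℕ, 2*(q^(N+1+k)/(N+1+k)) := Summable.tsum_le_tsum hmaj habs_sum hsummaj
        _ = 2*(∑' k : ℕ, q^(N+1+k)/(N+1+k)) := by rw [tsum_mul_left]
    have hint := tail_le_integral N q hq0 hq1
    have htsum0 : (0:ℝ) ≤ ∑' k : ℕ, q^(N+1+k)/(N+1+k) :=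
      tsum_nonneg (fun k => by positivity)
    have := abs_le.mp hT
    rw [hrange, hg0, zero_add] at hsplit
    rw [← hJ] at hint
    linarith [this.1, this.2]
  -- final arithmetic
  have hval := KN_integral N r θ θ1
  rw [← hg] at hval
  have hKint : (∫ θ' in (-θ1)..θ1, KN N (θ - θ') r) ≤ 2*θ2 - 2*θ1 + 4*J := by
    rw [hval]; linarith
  have hπ : 0 < π := Real.pi_pos
  calc |(1/(2*π)) * ∫ θ' in (-θ1)..θ1, KN N (θ - θ') r * v θ'|
      = (1/(2*π)) * |∫ θ' in (-θ1)..θ1, KN N (θ - θ') r * v θ'| := by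
        rw [abs_mul, abs_of_pos (by positivity)]
    _ ≤ (1/(2*π)) * ((2*θ2 - 2*θ1 + 4*J) * M) := by
        apply mul_le_mul_of_nonneg_left _ (by positivity)
        calc |∫ θ' in (-θ1)..θ1, KN N (θ - θ') r * v θ'|
            ≤ (∫ θ' in (-θ1)..θ1, KN N (θ - θ') r) * M := by
              rw [← step3]; exact le_trans step1 step2
          _ ≤ (2*θ2 - 2*θ1 + 4*J) * M := mul_le_mul_of_nonneg_right hKint hM0
    _ = ((θ2 - θ1)/π + (2/π) * J) * M := by
        field_simp
        ring
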